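/- arXiv:1807.02069 — 2 statements merged into one kernel-verified Lean document; each statement's English description precedes it below -/
import Mathlib

section
/- Every solution u of the boundary value problem u'' = λ/(1+u)^2 · (1 - ε²/(1+u)²) on [-1,1] with u(-1)=u(1)=0 and 1+u>0 on [-1,1] is an even function: u(x)=u(-x) for all x in [-1,1]. -/
open Set Filter Topology

noncomputable def memsF (lam eps : ℝ) : ℝ → ℝ :=
  fun t => -lam * (1+t)⁻¹ + lam*eps^2/3 * ((1+t)^3)⁻¹

lemma hasDerivAt_memsF (lam eps s : ℝ) (hs : 1 + s ≠ 0) :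
    HasDerivAt (memsF lam eps)
      (lam / (1+s)^2 * (1 - eps^2/(1+s)^2)) s := by
  have h1 : HasDerivAt (fun t : ℝ => 1 + t) 1 s := by
    simpa using (hasDerivAt_id s).const_add (1:ℝ)
  have h2 := h1.fun_inv hs
  have h3 : HasDerivAt (fun t : ℝ => (1+t)^3) (3*(1+s)^2) s := by
    simpa using h1.fun_pow 3
  have h4 := h3.fun_inv (pow_ne_zero 3 hs)
  have := (h2.const_mul (-lam)).add (h4.const_mul (lam*eps^2/3))
  refine this.congr_deriv ?_
  field_simp
  ring

lemma hasDerivAt_memsf (lam eps s : ℝ) (hs : 1 + s ≠ 0) :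
    HasDerivAt (fun t : ℝ => lam / (1+t)^2 * (1 - eps^2/(1+t)^2))
      (-2*lam/(1+s)^3 + 4*lam*eps^2/(1+s)^5) s := by
  have h1 : HasDerivAt (fun t : ℝ => 1 + t) 1 s := by
    simpa using (hasDerivAt_id s).const_add (1:ℝ)
  have h2 : HasDerivAt (fun t : ℝ => (1+t)^2) (2*(1+s)) s := by
    simpa using h1.fun_pow 2
  have hne : ((1+s)^2 : ℝ) ≠ 0 := pow_ne_zero 2 hs
  have h3 : HasDerivAt (fun t : ℝ => lam/(1+t)^2)
      ((0*(1+s)^2 - lam*(2*(1+s)))/((1+s)^2)^2) s :=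
    (hasDerivAt_const s lam).div h2 hne
  have h4 : HasDerivAt (fun t : ℝ => eps^2/(1+t)^2)
      ((0*(1+s)^2 - eps^2*(2*(1+s)))/((1+s)^2)^2) s :=
    (hasDerivAt_const s (eps^2)).div h2 hne
  have h5 := h4.const_sub (1:ℝ)
  have := h3.fun_mul h5
  refine this.congr_deriv ?_
  field_simp
  ring

/-- near a zero with nonzero derivative, on the right the sign of u matches m -/
lemma deriv_sign_right (u : ℝ → ℝ) {a b m : ℝ} (hab : a < b)
    (h : HasDerivAt u m a) (ha : u a = 0) (hm : m ≠ 0) :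
    ∃ x ∈ Ioo a b, 0 < u x * m := by
  have h1 : Tendsto (slope u a) (𝓝[≠] a) (𝓝 m) := hasDerivAt_iff_tendsto_slope.mp h
  have h2 : Tendsto (slope u a) (𝓝[>] a) (𝓝 m) :=
    h1.mono_left (nhdsWithin_mono a (fun x hx => ne_of_gt hx))
  have hopen : IsOpen {y : ℝ | 0 < y * m} := isOpen_lt continuous_const (continuous_id.mul continuous_const)
  have hmem : {y : ℝ | 0 < y * m} ∈ 𝓝 m := hopen.mem_nhds (by simpa using mul_self_pos.mpr hm)
  have h3 : ∀ᶠ x in 𝓝[>] a, 0 < slope u a x * m := h2.eventually hmem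
  have h4 : Ioo a b ∈ 𝓝[>] a := Ioo_mem_nhdsGT_of_mem ⟨le_refl a, hab⟩
  obtain ⟨x, hx1, hx2⟩ := (h3.and (eventually_of_mem h4 (fun x hx => hx))).exists
  refine ⟨x, hx2, ?_⟩
  have hxa : x - a > 0 := sub_pos.mpr hx2.1
  have : u x = slope u a x * (x - a) := by
    rw [slope_def_field, ha, sub_zero, div_mul_cancel₀ _ (ne_of_gt hxa)]
  rw [this]
  calc (0:ℝ) < slope u a x * m * (x - a) := mul_pos hx1 hxa
  _ = slope u a x * (x - a) * m := by ring

/-- near a zero with nonzero derivative, on the left the sign of u is opposite m -/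
lemma deriv_sign_left (u : ℝ → ℝ) {a b m : ℝ} (hab : a < b)
    (h : HasDerivAt u m b) (hb : u b = 0) (hm : m ≠ 0) :
    ∃ x ∈ Ioo a b, u x * m < 0 := by
  have h1 : Tendsto (slope u b) (𝓝[≠] b) (𝓝 m) := hasDerivAt_iff_tendsto_slope.mp h
  have h2 : Tendsto (slope u b) (𝓝[<] b) (𝓝 m) :=
    h1.mono_left (nhdsWithin_mono b (fun x hx => ne_of_lt hx))
  have hopen : IsOpen {y : ℝ | 0 < y * m} := isOpen_lt continuous_const (continuous_id.mul continuous_const)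
  have hmem : {y : ℝ | 0 < y * m} ∈ 𝓝 m := hopen.mem_nhds (by simpa using mul_self_pos.mpr hm)
  have h3 : ∀ᶠ x in 𝓝[<] b, 0 < slope u b x * m := h2.eventually hmem
  have h4 : Ioo a b ∈ 𝓝[<] b := Ioo_mem_nhdsLT_of_mem ⟨hab, le_refl b⟩
  obtain ⟨x, hx1, hx2⟩ := (h3.and (eventually_of_mem h4 (fun x hx => hx))).exists
  refine ⟨x, hx2, ?_⟩
  have hxb : x - b < 0 := sub_neg.mpr hx2.2
  have : u x = slope u b x * (x - b) := by
    rw [slope_def_field, hb, sub_zero, div_mul_cancel₀ _ (ne_of_lt hxb)]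
  rw [this]
  calc slope u b x * (x - b) * m = slope u b x * m * (x - b) := by ring
  _ < 0 := mul_neg_of_pos_of_neg hx1 hxb

set_option maxHeartbeats 1000000 in
/-- Every solution of the regularized MEMS boundary value problem is even. -/
theorem stmt0 (lam eps : ℝ) (hlam : 0 < lam) (heps : 0 ≤ eps) (u : ℝ → ℝ)
    (hu : ContDiff ℝ 2 u)
    (hpos : ∀ x ∈ Set.Icc (-1:ℝ) 1, 0 < 1 + u x)
    (hode : ∀ x ∈ Set.Icc (-1:ℝ) 1,
      deriv (deriv u) x = lam / (1 + u x)^2 * (1 - eps^2 / (1 + u x)^2))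
    (hbc1 : u (-1) = 0) (hbc2 : u 1 = 0) :
    ∀ x ∈ Set.Icc (-1:ℝ) 1, u x = u (-x) := by
  have hu1 : Differentiable ℝ u := hu.differentiable (by norm_num)
  have hcd : ContDiff ℝ 1 (deriv u) := (contDiff_succ_iff_deriv.mp (show ContDiff ℝ ((1:ℕ)+1) u by exact_mod_cast hu)).2.2
  have hu2 : Differentiable ℝ (deriv u) := hcd.differentiable (by norm_num)
  set F := memsF lam eps with hF
  set f : ℝ → ℝ := fun s => lam / (1+s)^2 * (1 - eps^2/(1+s)^2) with hf
  set E : ℝ → ℝ := fun x => (deriv u x)^2/2 - F (u x) with hE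
  -- energy has zero derivative on the interval
  have hE' : ∀ x ∈ Icc (-1:ℝ) 1, HasDerivAt E 0 x := by
    intro x hx
    have hne : 1 + u x ≠ 0 := ne_of_gt (hpos x hx)
    have hd1 : HasDerivAt (fun y => (deriv u y)^2/2)
        ((2 * deriv u x ^ 1 * deriv (deriv u) x)/2) x :=
      ((hu2 x).hasDerivAt.pow 2).div_const 2
    have hd2 : HasDerivAt (fun y => F (u y)) (f (u x) * deriv u x) x :=
      (hasDerivAt_memsF lam eps (u x) hne).comp x (hu1 x).hasDerivAt
    have := hd1.fun_sub hd2
    refine this.congr_deriv (Eq.symm ?_)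
    rw [hode x hx]
    show (0:ℝ) = 2 * deriv u x ^ 1 * (f (u x)) / 2 - f (u x) * deriv u x
    ring
  -- energy is constant
  have hEcont : ContinuousOn E (Icc (-1:ℝ) 1) :=
    fun x hx => (hE' x hx).continuousAt.continuousWithinAt
  have hEconst : ∀ x ∈ Icc (-1:ℝ) 1, E x = E (-1) :=
    constant_of_has_deriv_right_zero hEcont
      (fun x hx => (hE' x (Ico_subset_Icc_self hx)).hasDerivWithinAt)
  have h1m : (1:ℝ) ∈ Icc (-1:ℝ) 1 := by norm_num
  have hm1m : (-1:ℝ) ∈ Icc (-1:ℝ) 1 := by norm_num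
  have hsq : (deriv u 1)^2 = (deriv u (-1))^2 := by
    have := hEconst 1 h1m
    simp only [hE, hbc1, hbc2] at this
    linarith
  -- main symmetric-data case
  have main : deriv u (-1) = -(deriv u 1) → ∀ x ∈ Icc (-1:ℝ) 1, u x = u (-x) := by
    intro hA
    -- compact range
    obtain ⟨xm, hxm, hmin⟩ := isCompact_Icc.exists_isMinOn (nonempty_Icc.mpr (by norm_num : (-1:ℝ) ≤ 1))
      (hu1.continuous.continuousOn)
    obtain ⟨xM, hxM, hmax⟩ := isCompact_Icc.exists_isMaxOn (nonempty_Icc.mpr (by norm_num : (-1:ℝ) ≤ 1))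
      (hu1.continuous.continuousOn)
    set c := u xm with hc
    set d := u xM with hd
    have hrange : ∀ x ∈ Icc (-1:ℝ) 1, u x ∈ Icc c d := fun x hx => ⟨hmin hx, hmax hx⟩
    have hcpos : 0 < 1 + c := hpos xm hxm
    have hne : ∀ s ∈ Icc c d, 1 + s ≠ 0 := fun s hs => ne_of_gt (lt_of_lt_of_le hcpos (by linarith [hs.1]))
    -- Lipschitz constant for f on [c,d]
    set fd : ℝ → ℝ := fun s => -2*lam/(1+s)^3 + 4*lam*eps^2/(1+s)^5 with hfd
    have hfdcont : ContinuousOn fd (Icc c d) := by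
      apply ContinuousOn.add
      · exact ContinuousOn.div continuousOn_const (by fun_prop)
          (fun x hx => pow_ne_zero 3 (hne x hx))
      · exact ContinuousOn.div continuousOn_const (by fun_prop)
          (fun x hx => pow_ne_zero 5 (hne x hx))
    obtain ⟨C, hC⟩ := isCompact_Icc.exists_bound_of_continuousOn hfdcont
    have hlip : LipschitzOnWith (Real.toNNReal C) f (Icc c d) := by
      apply (convex_Icc c d).lipschitzOnWith_of_nnnorm_hasDerivWithin_le
        (f' := fd)
        (fun x hx => (hasDerivAt_memsf lam eps x (hne x hx)).hasDerivWithinAt)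
      intro x hx
      rw [← NNReal.coe_le_coe]
      simp only [coe_nnnorm, Real.coe_toNNReal']
      exact le_max_of_le_left (hC x hx)
    -- the first order system
    set vf : ℝ × ℝ → ℝ × ℝ := fun p => (p.2, f p.1) with hvf
    set ss : Set (ℝ × ℝ) := Icc c d ×ˢ (univ : Set ℝ) with hss
    set K : NNReal := 1 ⊔ Real.toNNReal C with hK
    have hvlip : LipschitzOnWith K vf ss := by
      have hsnd : LipschitzOnWith 1 (fun p : ℝ × ℝ => p.2) ss :=
        (LipschitzWith.prod_snd).lipschitzOnWith (s := ss)
      have hfst : LipschitzOnWith (Real.toNNReal C) (fun p : ℝ × ℝ => f p.1) ss := by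
        have := hlip.comp ((LipschitzWith.prod_fst).lipschitzOnWith (s := ss))
          (fun p hp => hp.1)
        simpa only [mul_one, Function.comp_def] using this
      have := hsnd.prodMk hfst
      simpa [hK, hvf] using this
    set y : ℝ → ℝ × ℝ := fun x => (u x, deriv u x) with hy
    set z : ℝ → ℝ × ℝ := fun x => (u (-x), -deriv u (-x)) with hz
    have hy' : ∀ x ∈ Icc (-1:ℝ) 1, HasDerivAt y (vf (y x)) x := by
      intro x hx
      have := ((hu1 x).hasDerivAt).prodMk ((hu2 x).hasDerivAt)
      rw [show vf (y x) = (deriv u x, deriv (deriv u) x) by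
        simp [hvf, hy, hode x hx, hf]]
      exact this
    have hz' : ∀ x ∈ Icc (-1:ℝ) 1, HasDerivAt z (vf (z x)) x := by
      intro x hx
      have hxm' : -x ∈ Icc (-1:ℝ) 1 := ⟨by linarith [hx.2], by linarith [hx.1]⟩
      have hn : HasDerivAt (fun t : ℝ => -t) (-1) x := by simpa using hasDerivAt_neg x
      have d1 : HasDerivAt (fun t => u (-t)) (deriv u (-x) * (-1)) x :=
        ((hu1 (-x)).hasDerivAt).comp x hn
      have d2 : HasDerivAt (fun t => -(deriv u (-t))) (-(deriv (deriv u) (-x) * (-1))) x :=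
        (((hu2 (-x)).hasDerivAt).comp x hn).neg
      have := d1.prodMk d2
      rw [show vf (z x) = (deriv u (-x) * (-1), -(deriv (deriv u) (-x) * (-1))) by
        simp [hvf, hz, hode (-x) hxm', hf]]
      exact this
    have hys : ∀ x ∈ Icc (-1:ℝ) 1, y x ∈ ss := fun x hx => ⟨hrange x hx, trivial⟩
    have hzs : ∀ x ∈ Icc (-1:ℝ) 1, z x ∈ ss := fun x hx =>
      ⟨hrange (-x) ⟨by linarith [hx.2], by linarith [hx.1]⟩, trivial⟩
    have hycont : ContinuousOn y (Icc (-1:ℝ) 1) :=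
      (hu1.continuous.prodMk hu2.continuous).continuousOn
    have hzcont : ContinuousOn z (Icc (-1:ℝ) 1) :=
      ((hu1.continuous.comp continuous_neg).prodMk
        (hu2.continuous.comp continuous_neg).neg).continuousOn
    have hb1 : y 1 = z 1 := by
      simp [hy, hz, hbc1, hbc2, hA]
    have key : EqOn y z (Icc (-1:ℝ) 1) := by
      apply ODE_solution_unique_of_mem_Icc_left (v := fun _ => vf) (s := fun _ => ss) (K := K)
        (fun _ _ => hvlip) hycont
        (fun t ht => (hy' t (Ioc_subset_Icc_self ht)).hasDerivWithinAt)
        (fun t ht => hys t (Ioc_subset_Icc_self ht)) hzcont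
        (fun t ht => (hz' t (Ioc_subset_Icc_self ht)).hasDerivWithinAt)
        (fun t ht => hzs t (Ioc_subset_Icc_self ht)) hb1
    intro x hx
    have := key hx
    exact congrArg Prod.fst this
  -- case analysis
  have habs : |deriv u 1| = |deriv u (-1)| := by
    rw [← Real.sqrt_sq_eq_abs, ← Real.sqrt_sq_eq_abs, hsq]
  rcases abs_eq_abs.mp habs with hcase | hcase
  · -- deriv u 1 = deriv u (-1)
    by_cases h0 : deriv u 1 = 0
    · exact main (by rw [← hcase, h0, neg_zero])
    · -- contradiction
      exfalso
      set m := deriv u 1 with hmm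
      have hdm1 : deriv u (-1) = m := hcase.symm
      -- points of both signs
      obtain ⟨x1, hx1, hsx1⟩ := deriv_sign_right u (by norm_num : (-1:ℝ) < 1)
        ((hu1 (-1)).hasDerivAt) hbc1 (by rw [hdm1]; exact h0)
      obtain ⟨x2, hx2, hsx2⟩ := deriv_sign_left u (by norm_num : (-1:ℝ) < 1)
        ((hu1 1).hasDerivAt) hbc2 h0
      -- from these, get a positive and a negative value of u in the open interval
      have hboth : (∃ a ∈ Ioo (-1:ℝ) 1, 0 < u a) ∧ (∃ b ∈ Ioo (-1:ℝ) 1, u b < 0) := by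
        rcases lt_or_gt_of_ne h0 with hneg | hposm
        · constructor
          · exact ⟨x2, hx2, by nlinarith⟩
          · exact ⟨x1, hx1, by nlinarith⟩
        · constructor
          · exact ⟨x1, hx1, by nlinarith⟩
          · exact ⟨x2, hx2, by nlinarith⟩
      obtain ⟨⟨xp, hxp, hxp'⟩, ⟨xn, hxn, hxn'⟩⟩ := hboth
      -- interior max with positive value
      obtain ⟨p, hp, hP⟩ := isCompact_Icc.exists_isMaxOn
        (nonempty_Icc.mpr (by norm_num : (-1:ℝ) ≤ 1)) (hu1.continuous.continuousOn)
      have hup : 0 < u p := lt_of_lt_of_le hxp' (hP (Ioo_subset_Icc_self hxp))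
      have hpIoo : p ∈ Ioo (-1:ℝ) 1 := by
        rcases hp.1.lt_or_eq with h | h
        · rcases hp.2.lt_or_eq with h' | h'
          · exact ⟨h, h'⟩
          · exfalso; rw [h'] at hup; rw [hbc2] at hup; exact lt_irrefl 0 hup
        · exfalso; rw [← h] at hup; rw [hbc1] at hup; exact lt_irrefl 0 hup
      have hdp : deriv u p = 0 := by
        apply IsLocalMax.deriv_eq_zero
        exact hP.isLocalMax (mem_nhds_iff.mpr ⟨Ioo (-1:ℝ) 1, Ioo_subset_Icc_self, isOpen_Ioo, hpIoo⟩)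
      -- interior min with negative value
      obtain ⟨q, hq, hQ⟩ := isCompact_Icc.exists_isMinOn
        (nonempty_Icc.mpr (by norm_num : (-1:ℝ) ≤ 1)) (hu1.continuous.continuousOn)
      have huq : u q < 0 := lt_of_le_of_lt (hQ (Ioo_subset_Icc_self hxn)) hxn'
      have hqIoo : q ∈ Ioo (-1:ℝ) 1 := by
        rcases hq.1.lt_or_eq with h | h
        · rcases hq.2.lt_or_eq with h' | h'
          · exact ⟨h, h'⟩
          · exfalso; rw [h'] at huq; rw [hbc2] at huq; exact lt_irrefl 0 huq
        · exfalso; rw [← h] at huq; rw [hbc1] at huq; exact lt_irrefl 0 huq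
      have hdq : deriv u q = 0 := by
        apply IsLocalMin.deriv_eq_zero
        exact hQ.isLocalMin (mem_nhds_iff.mpr ⟨Ioo (-1:ℝ) 1, Ioo_subset_Icc_self, isOpen_Ioo, hqIoo⟩)
      -- energy relations
      have hEp : F 0 - F (u p) = m^2/2 := by
        have e1 := hEconst p (Ioo_subset_Icc_self hpIoo)
        have e2 := hEconst 1 h1m
        simp only [hE, hdp, hbc2] at e1 e2
        linarith
      have hEq : F 0 - F (u q) = m^2/2 := by
        have e1 := hEconst q (Ioo_subset_Icc_self hqIoo)
        have e2 := hEconst 1 h1m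
        simp only [hE, hdq, hbc2] at e1 e2
        linarith
      have hm2 : 0 < m^2 := pow_two_pos_of_ne_zero h0
      -- MVT for F on [0, u p] : some ξ with f ξ < 0, ξ > 0
      have hFc1 : ContinuousOn F (Icc 0 (u p)) := fun x hx =>
        (hasDerivAt_memsF lam eps x
          (ne_of_gt (by linarith [hx.1] : (0:ℝ) < 1 + x))).continuousAt.continuousWithinAt
      obtain ⟨ξ, hξ, hfξ⟩ := exists_hasDerivAt_eq_slope F
        (fun s => lam / (1+s)^2 * (1 - eps^2/(1+s)^2)) hup hFc1
        (fun x hx => hasDerivAt_memsF lam eps x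
          (ne_of_gt (by linarith [hx.1.le] : (0:ℝ) < 1 + x)))
      have hξpos : 0 < ξ := hξ.1
      have hfξneg : lam / (1+ξ)^2 * (1 - eps^2/(1+ξ)^2) < 0 := by
        rw [hfξ]
        apply div_neg_of_neg_of_pos
        · linarith
        · linarith
      have heps1 : 1 < eps^2 := by
        have hA : (0:ℝ) < lam/(1+ξ)^2 := div_pos hlam (by positivity)
        have hB : 1 - eps^2/(1+ξ)^2 < 0 := by
          by_contra hc
          push_neg at hc
          nlinarith [mul_nonneg hA.le hc]
        have hlt : (1+ξ)^2 < eps^2 := by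
          have := (one_lt_div (by positivity : (0:ℝ) < (1+ξ)^2)).mp (by linarith)
          linarith
        nlinarith [hξpos, hlt]
      -- MVT for F on [u q, 0] : some η with f η > 0, -1 < η < 0
      have huq1 : 0 < 1 + u q := hpos q hq
      have hFc2 : ContinuousOn F (Icc (u q) 0) := fun x hx =>
        (hasDerivAt_memsF lam eps x
          (ne_of_gt (by linarith [hx.1] : (0:ℝ) < 1 + x))).continuousAt.continuousWithinAt
      obtain ⟨η, hη, hfη⟩ := exists_hasDerivAt_eq_slope F
        (fun s => lam / (1+s)^2 * (1 - eps^2/(1+s)^2)) huq hFc2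
        (fun x hx => hasDerivAt_memsF lam eps x
          (ne_of_gt (by linarith [hx.1.le] : (0:ℝ) < 1 + x)))
      have hηpos : 0 < 1 + η := by linarith [hη.1]
      have hη0 : η < 0 := hη.2
      have hfηpos : 0 < lam / (1+η)^2 * (1 - eps^2/(1+η)^2) := by
        rw [hfη]
        apply div_pos
        · linarith
        · linarith
      have heps2 : eps^2 < 1 := by
        have hA : (0:ℝ) < lam/(1+η)^2 := div_pos hlam (by positivity)
        have hB : 0 < 1 - eps^2/(1+η)^2 := by
          by_contra hc
          push_neg at hc
          nlinarith [mul_nonpos_of_nonneg_of_nonpos hA.le hc]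
        have hlt : eps^2 < (1+η)^2 := by
          have := (div_lt_one (by positivity : (0:ℝ) < (1+η)^2)).mp (by linarith)
          linarith
        nlinarith [hηpos, hη0, hlt]
      linarith
  · exact main (by rw [hcase, neg_neg])
end

section
/- For the integrable system u' = u⁴w, w' = u² - 1, the stable manifold of the saddle (1,0) restricted to u ≥ 1 is exactly the graph {(u, -√(4/3 - 2/u + 2/(3u³))) : u ≥ 1}: a solution starting on this graph with u(0) > 1 converges to (1,0) as the independent variable tends to +∞. -/
open Set Filter Real Topology

noncomputable def Fq (x : ℝ) : ℝ := 4/3 - 2/x + 2/(3*x^3)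

lemma Fq_eq {x : ℝ} (hx : x ≠ 0) : Fq x = 2*(x-1)^2*(2*x+1)/(3*x^3) := by
  unfold Fq; field_simp; ring

lemma Fq_nonneg {x : ℝ} (hx : 1 ≤ x) : 0 ≤ Fq x := by
  rw [Fq_eq (by positivity)]; positivity

lemma Fq_pos {x : ℝ} (hx : 1 < x) : 0 < Fq x := by
  rw [Fq_eq (by positivity)]
  have h1 : (0:ℝ) < x := by linarith
  apply div_pos (by nlinarith [sq_nonneg (x-1)]) (by positivity)

lemma Fq_le {x : ℝ} (hx : 1 ≤ x) : Fq x ≤ 4*(x-1)^2 := by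
  have h0 : (0:ℝ) < x := by linarith
  rw [Fq_eq (ne_of_gt h0)]
  rw [div_le_iff₀ (by positivity)]
  have key : (0:ℝ) ≤ (x-1)^2 * (6*x^3 - 2*x - 1) :=
    mul_nonneg (sq_nonneg _) (by nlinarith [mul_nonneg (mul_nonneg h0.le
      (by linarith : (0:ℝ) ≤ x-1)) (by linarith : (0:ℝ) ≤ x+1)])
  nlinarith [key]

lemma Fq_lower {L x M : ℝ} (h1 : 1 ≤ L) (hL : L ≤ x) (hx : x ≤ M) :
    2*(L-1)^2/M^3 ≤ Fq x := by
  have h0 : (0:ℝ) < x := by linarith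
  have hM : (0:ℝ) < M := by linarith
  rw [Fq_eq (ne_of_gt h0)]
  rw [div_le_div_iff₀ (by positivity) (by positivity)]
  have e1 : (L-1)^2 ≤ (x-1)^2 := by nlinarith
  have e2 : x^3 ≤ M^3 := pow_le_pow_left₀ h0.le hx 3
  have e3 : (3:ℝ) ≤ 2*x+1 := by linarith
  have c1 : 2*(L-1)^2 * (3*x^3) ≤ 2*(x-1)^2 * (3*x^3) := by
    apply mul_le_mul_of_nonneg_right (by linarith) (by positivity)
  have c2 : 2*(x-1)^2 * (3*x^3) ≤ 2*(x-1)^2 * ((2*x+1)*x^3) := by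
    apply mul_le_mul_of_nonneg_left _ (by positivity)
    apply mul_le_mul_of_nonneg_right e3 (by positivity)
  have c3 : 2*(x-1)^2 * ((2*x+1)*x^3) ≤ 2*(x-1)^2 * ((2*x+1)*M^3) := by
    apply mul_le_mul_of_nonneg_left _ (by positivity)
    apply mul_le_mul_of_nonneg_left e2 (by positivity)
  nlinarith [c1, c2, c3]

lemma Fq_hasDeriv {x : ℝ} (hx : x ≠ 0) : HasDerivAt Fq (2/x^2 - 2/x^4) x := by
  have h1 : HasDerivAt (fun y : ℝ => 2/y) (-(2/x^2)) x := by
    simpa [div_eq_mul_inv] using (hasDerivAt_inv hx).const_mul (2:ℝ)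
  have hp : HasDerivAt (fun y : ℝ => 3*y^3) (3*((3:ℕ)*x^2)) x := by
    simpa using (hasDerivAt_pow 3 x).const_mul (3:ℝ)
  have h2 : HasDerivAt (fun y : ℝ => 2/(3*y^3))
      ((0*(3*x^3) - 2*(3*((3:ℕ)*x^2)))/(3*x^3)^2) x :=
    (hasDerivAt_const x (2:ℝ)).div hp (by positivity)
  have h3 : HasDerivAt Fq (0 - (-(2/x^2)) + ((0*(3*x^3) - 2*(3*((3:ℕ)*x^2)))/(3*x^3)^2)) x :=
    ((hasDerivAt_const x (4/3:ℝ)).sub h1).add h2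
  convert h3 using 1
  field_simp
  ring

/-- For u' = u⁴w, w' = u²-1, a solution starting on the graph w = -√(4/3-2/u+2/(3u³))
with u(0) = u₀ > 1 stays on that graph and converges to the saddle (1,0) as t → +∞. -/
theorem stmt12 (u w : ℝ → ℝ) (u₀ : ℝ) (hu₀ : 1 < u₀)
    (hu : ∀ t, 0 ≤ t → HasDerivAt u ((u t)^4 * w t) t)
    (hw : ∀ t, 0 ≤ t → HasDerivAt w ((u t)^2 - 1) t)
    (hinit1 : u 0 = u₀)
    (hinit2 : w 0 = -Real.sqrt (4/3 - 2/u₀ + 2/(3*u₀^3))) :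
    (∀ t, 0 ≤ t → w t = -Real.sqrt (4/3 - 2/(u t) + 2/(3*(u t)^3))) ∧
    Filter.Tendsto u Filter.atTop (nhds 1) ∧
    Filter.Tendsto w Filter.atTop (nhds 0) := by
  have hw0 : w 0 = -Real.sqrt (Fq u₀) := hinit2
  have hw0sq : (w 0)^2 = Fq (u 0) := by
    rw [hinit1, hw0, neg_pow]
    simp [Real.sq_sqrt (Fq_nonneg hu₀.le)]
  have hw0neg : w 0 < 0 := by
    rw [hw0, neg_lt_zero]
    exact Real.sqrt_pos.mpr (Fq_pos hu₀)
  have hucont : ContinuousOn u (Ici 0) := fun t ht => (hu t ht).continuousAt.continuousWithinAt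
  have hwcont : ContinuousOn w (Ici 0) := fun t ht => (hw t ht).continuousAt.continuousWithinAt
  -- conservation of energy + sign of w, while u > 1
  have key : ∀ s, 0 ≤ s → (∀ r ∈ Icc (0:ℝ) s, 1 < u r) →
      ∀ r ∈ Icc (0:ℝ) s, w r < 0 ∧ (w r)^2 = Fq (u r) := by
    intro s hs hgt
    have hEd : ∀ r ∈ Icc (0:ℝ) s, HasDerivAt (fun t => (w t)^2 - Fq (u t)) 0 r := by
      intro r hr
      have hr0 : (0:ℝ) ≤ r := hr.1
      have hur : 1 < u r := hgt r hr
      have hune : u r ≠ 0 := by intro h; rw [h] at hur; linarith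
      have d1 := (hw r hr0).pow 2
      have d2 : HasDerivAt (fun t => Fq (u t)) ((2/(u r)^2 - 2/(u r)^4) * ((u r)^4 * w r)) r :=
        (Fq_hasDeriv hune).comp r (hu r hr0)
      have d3 : HasDerivAt (fun t => (w t)^2 - Fq (u t))
          ((2:ℕ) * w r ^ (2 - 1) * (u r ^ 2 - 1) - (2 / u r ^ 2 - 2 / u r ^ 4) * (u r ^ 4 * w r)) r :=
        d1.sub d2
      convert d3 using 1
      push_cast
      field_simp
      ring
    have hEc : ContinuousOn (fun t => (w t)^2 - Fq (u t)) (Icc 0 s) := fun r hr =>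
      ((hEd r hr).continuousAt).continuousWithinAt
    have hconst := constant_of_has_deriv_right_zero hEc
      (fun r hr => (hEd r (Ico_subset_Icc_self hr)).hasDerivWithinAt)
    have hsq : ∀ r ∈ Icc (0:ℝ) s, (w r)^2 = Fq (u r) := by
      intro r hr
      have h2 := hconst r hr
      have := hw0sq
      linarith
    intro r hr
    refine ⟨?_, hsq r hr⟩
    by_contra hge
    push_neg at hge
    have hr0 : (0:ℝ) ≤ r := hr.1
    have hwc : ContinuousOn w (Icc 0 r) := hwcont.mono (fun x hx => hx.1)
    have h0m : (0:ℝ) ∈ Icc (w 0) (w r) := ⟨hw0neg.le, hge⟩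
    obtain ⟨c, hc, hc0⟩ := intermediate_value_Icc hr0 hwc h0m
    have hcs : c ∈ Icc (0:ℝ) s := ⟨hc.1, le_trans hc.2 hr.2⟩
    have h3 := hsq c hcs
    rw [hc0] at h3
    have := Fq_pos (hgt c hcs)
    simp at h3
    linarith
  -- u is decreasing while u > 1
  have hAnti : ∀ s, 0 ≤ s → (∀ r ∈ Icc (0:ℝ) s, 1 < u r) → AntitoneOn u (Icc 0 s) := by
    intro s hs hgt
    apply antitoneOn_of_deriv_nonpos (convex_Icc 0 s)
    · exact hucont.mono (fun x hx => hx.1)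
    · intro r hr
      rw [interior_Icc] at hr
      exact ((hu r hr.1.le).differentiableAt).differentiableWithinAt
    · intro r hr
      rw [interior_Icc] at hr
      rw [(hu r hr.1.le).deriv]
      have hrm : r ∈ Icc (0:ℝ) s := ⟨hr.1.le, hr.2.le⟩
      have hwneg := (key s hs hgt r hrm).1
      have h1 : (0:ℝ) < u r := by linarith [hgt r hrm]
      nlinarith [pow_pos h1 4]
  have hUle : ∀ s, 0 ≤ s → (∀ r ∈ Icc (0:ℝ) s, 1 < u r) → ∀ r ∈ Icc (0:ℝ) s, u r ≤ u₀ := by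
    intro s hs hgt r hr
    have := hAnti s hs hgt ⟨le_refl 0, hs⟩ hr hr.1
    rwa [hinit1] at this
  -- the main invariant : u stays > 1 forever
  have hgt1 : ∀ t, 0 ≤ t → 1 < u t := by
    by_contra hcon
    push_neg at hcon
    obtain ⟨t1, ht1, ht1le⟩ := hcon
    have hSc : IsClosed {t : ℝ | 0 ≤ t ∧ u t ≤ 1} := by
      have : {t : ℝ | 0 ≤ t ∧ u t ≤ 1} = Ici 0 ∩ u ⁻¹' (Iic 1) := by
        ext t; simp [mem_Ici, mem_Iic, and_comm]
      rw [this]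
      exact hucont.preimage_isClosed_of_isClosed isClosed_Ici isClosed_Iic
    have hSne : {t : ℝ | 0 ≤ t ∧ u t ≤ 1}.Nonempty := ⟨t1, ht1, ht1le⟩
    have hSb : BddBelow {t : ℝ | 0 ≤ t ∧ u t ≤ 1} := ⟨0, fun t ht => ht.1⟩
    set τ := sInf {t : ℝ | 0 ≤ t ∧ u t ≤ 1} with hτdef
    have hτS : τ ∈ {t : ℝ | 0 ≤ t ∧ u t ≤ 1} := hSc.csInf_mem hSne hSb
    have hτ0 : 0 ≤ τ := hτS.1
    have hτle : u τ ≤ 1 := hτS.2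
    have hτpos : 0 < τ := by
      rcases eq_or_lt_of_le hτ0 with h | h
      · exfalso; rw [← h, hinit1] at hτle; linarith
      · exact h
    have hbefore : ∀ r ∈ Ico (0:ℝ) τ, 1 < u r := by
      intro r hr
      by_contra hle
      push_neg at hle
      have := csInf_le hSb ⟨hr.1, hle⟩
      rw [← hτdef] at this
      linarith [hr.2]
    set K := 2*u₀^4 with hK
    have hKpos : 0 < K := by positivity
    have hg : MonotoneOn (fun t => (u t - 1) * Real.exp (K*t)) (Ico 0 τ) := by
      apply monotoneOn_of_deriv_nonneg (convex_Ico 0 τ)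
      · exact ((hucont.mono (fun x hx => hx.1)).sub continuousOn_const).mul
          ((Real.continuous_exp.comp (continuous_const.mul continuous_id)).continuousOn)
      · intro r hr
        rw [interior_Ico] at hr
        have he : HasDerivAt (fun t : ℝ => Real.exp (K*t)) (Real.exp (K*r) * K) r := by
          simpa using ((hasDerivAt_id r).const_mul K).exp
        exact (((hu r hr.1.le).sub_const 1).mul he).differentiableAt.differentiableWithinAt
      · intro r hr
        rw [interior_Ico] at hr
        have hr0 : 0 ≤ r := hr.1.le
        have hrIcc : ∀ x ∈ Icc (0:ℝ) r, 1 < u x := fun x hx =>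
          hbefore x ⟨hx.1, lt_of_le_of_lt hx.2 hr.2⟩
        obtain ⟨hwneg, hwsq⟩ := key r hr0 hrIcc r ⟨hr0, le_refl r⟩
        have hur1 : 1 < u r := hrIcc r ⟨hr0, le_refl r⟩
        have hurle : u r ≤ u₀ := hUle r hr0 hrIcc r ⟨hr0, le_refl r⟩
        have he : HasDerivAt (fun t : ℝ => Real.exp (K*t)) (Real.exp (K*r) * K) r := by
          simpa using ((hasDerivAt_id r).const_mul K).exp
        have hder : HasDerivAt (fun t => (u t - 1) * Real.exp (K*t))
            (u r ^ 4 * w r * Real.exp (K * r) + (u r - 1) * (Real.exp (K * r) * K)) r :=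
          ((hu r hr0).sub_const 1).mul he
        rw [hder.deriv]
        have hwe : w r = -Real.sqrt (Fq (u r)) := by
          have h4 : Real.sqrt ((w r)^2) = -w r := by
            rw [Real.sqrt_sq_eq_abs, abs_of_neg hwneg]
          rw [hwsq] at h4
          linarith
        have hsle : Real.sqrt (Fq (u r)) ≤ 2*(u r - 1) := by
          have h1 := Real.sqrt_le_sqrt (Fq_le hur1.le)
          rwa [show (4:ℝ)*(u r - 1)^2 = (2*(u r - 1))^2 by ring,
            Real.sqrt_sq (by linarith)] at h1
        have hp4 : (u r)^4 ≤ u₀^4 := by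
          apply pow_le_pow_left₀ (by linarith) hurle
        have hsnn : 0 ≤ Real.sqrt (Fq (u r)) := Real.sqrt_nonneg _
        have hexp : 0 < Real.exp (K*r) := Real.exp_pos _
        have hmul : (u r)^4 * Real.sqrt (Fq (u r)) ≤ u₀^4 * (2*(u r - 1)) :=
          mul_le_mul hp4 hsle hsnn (by positivity)
        have hmain : 0 ≤ K * (u r - 1) + (u r)^4 * w r := by
          rw [hwe, hK]; nlinarith
        nlinarith [hmain, hexp]
    have hbound : ∀ s ∈ Ico (0:ℝ) τ, u₀ - 1 ≤ (u s - 1) * Real.exp (K*s) := by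
      intro s hs
      have := hg (left_mem_Ico.mpr hτpos) hs hs.1
      simp only [mul_zero, Real.exp_zero, mul_one, hinit1] at this
      linarith
    have hne : (𝓝[Ico (0:ℝ) τ] τ).NeBot := by
      apply mem_closure_iff_nhdsWithin_neBot.mp
      rw [closure_Ico (ne_of_gt hτpos).symm]
      exact ⟨hτ0, le_refl τ⟩
    have hgcont : ContinuousWithinAt (fun t => (u t - 1) * Real.exp (K*t)) (Ico 0 τ) τ := by
      apply ContinuousWithinAt.mono _ (fun x (hx : x ∈ Ico (0:ℝ) τ) => hx.1)
      exact ((hucont τ hτ0).sub continuousWithinAt_const).mul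
        ((Real.continuous_exp.comp
          (continuous_const.mul continuous_id)).continuousAt.continuousWithinAt)
    have hfinal : u₀ - 1 ≤ (u τ - 1) * Real.exp (K*τ) := by
      haveI := hne
      exact ge_of_tendsto hgcont (eventually_nhdsWithin_of_forall hbound)
    nlinarith [Real.exp_pos (K*τ), hfinal, hτle, hu₀,
      mul_nonpos_of_nonpos_of_nonneg (by linarith : u τ - 1 ≤ 0) (Real.exp_pos (K*τ)).le]
  -- consequences of the invariant
  have honGraph : ∀ t, 0 ≤ t → w t < 0 ∧ (w t)^2 = Fq (u t) := fun t ht =>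
    key t ht (fun r hr => hgt1 r hr.1) t ⟨ht, le_refl t⟩
  have hform : ∀ t, 0 ≤ t → w t = -Real.sqrt (Fq (u t)) := by
    intro t ht
    obtain ⟨hneg, hsq⟩ := honGraph t ht
    have h4 : Real.sqrt ((w t)^2) = -w t := by
      rw [Real.sqrt_sq_eq_abs, abs_of_neg hneg]
    rw [hsq] at h4
    linarith
  have hule : ∀ t, 0 ≤ t → u t ≤ u₀ := fun t ht =>
    hUle t ht (fun r hr => hgt1 r hr.1) t ⟨ht, le_refl t⟩
  have hanti2 : ∀ s t, 0 ≤ s → s ≤ t → u t ≤ u s := by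
    intro s t hs hst
    have ht0 : 0 ≤ t := le_trans hs hst
    exact hAnti t ht0 (fun r hr => hgt1 r hr.1) ⟨hs, hst⟩ ⟨ht0, le_refl t⟩ hst
  refine ⟨fun t ht => hform t ht, ?_⟩
  -- convergence
  have hbdd : BddBelow (u '' Ici 0) := ⟨1, by rintro y ⟨t, ht, rfl⟩; exact (hgt1 t ht).le⟩
  have hneS : (u '' Ici 0).Nonempty := ⟨u 0, mem_image_of_mem u (mem_Ici.mpr le_rfl)⟩
  set L := sInf (u '' Ici 0) with hLdef
  have hL1 : 1 ≤ L := le_csInf hneS (by rintro y ⟨t, ht, rfl⟩; exact (hgt1 t ht).le)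
  have hLle : ∀ t, 0 ≤ t → L ≤ u t := fun t ht =>
    csInf_le hbdd (mem_image_of_mem u (mem_Ici.mpr ht))
  have htendu : Tendsto u atTop (𝓝 L) := by
    rw [tendsto_order]
    constructor
    · intro c hc
      filter_upwards [eventually_ge_atTop (0:ℝ)] with t ht
      exact lt_of_lt_of_le hc (hLle t ht)
    · intro c hc
      obtain ⟨y, hy, hyc⟩ := exists_lt_of_csInf_lt hneS hc
      obtain ⟨t0, ht0, rfl⟩ := hy
      filter_upwards [eventually_ge_atTop (max t0 0)] with t ht
      have h1 : t0 ≤ t := le_trans (le_max_left _ _) ht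
      exact lt_of_le_of_lt (hanti2 t0 t ht0 h1) hyc
  have hLeq : L = 1 := by
    by_contra hne1
    have hLgt : 1 < L := lt_of_le_of_ne hL1 (Ne.symm hne1)
    set c := Real.sqrt (2*(L-1)^2/u₀^3) with hcdef
    have hu₀p : (0:ℝ) < u₀ := by linarith
    have hcpos : 0 < c :=
      Real.sqrt_pos.mpr (div_pos (by nlinarith) (by positivity))
    have hwle : ∀ t, 0 ≤ t → w t ≤ -c := by
      intro t ht
      have hF : 2*(L-1)^2/u₀^3 ≤ Fq (u t) := Fq_lower hL1 (hLle t ht) (hule t ht)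
      have h2 := Real.sqrt_le_sqrt hF
      rw [hform t ht]
      rw [hcdef]
      linarith
    have hmono : AntitoneOn (fun t => u t + c * t) (Ici 0) := by
      apply antitoneOn_of_deriv_nonpos (convex_Ici 0)
      · exact hucont.add ((continuous_const.mul continuous_id).continuousOn)
      · intro r hr
        rw [interior_Ici] at hr
        have hc' : HasDerivAt (fun t : ℝ => c * t) c r := by
          simpa using (hasDerivAt_id r).const_mul c
        exact ((hu r hr.le).add hc').differentiableAt.differentiableWithinAt
      · intro r hr
        rw [interior_Ici] at hr
        have hc' : HasDerivAt (fun t : ℝ => c * t) c r := by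
          simpa using (hasDerivAt_id r).const_mul c
        rw [(show HasDerivAt (fun t => u t + c * t) (u r ^ 4 * w r + c) r from
          (hu r hr.le).add hc').deriv]
        have hwr := hwle r hr.le
        have hu1 : 1 ≤ u r := (hgt1 r hr.le).le
        have hp : 1 ≤ (u r)^4 := by
          have := pow_le_pow_left₀ (by norm_num : (0:ℝ) ≤ 1) hu1 4
          simpa using this
        nlinarith [mul_nonneg (by linarith : (0:ℝ) ≤ (u r)^4 - 1) (by linarith : (0:ℝ) ≤ -w r)]
    have hT0 : 0 ≤ u₀ / c := by positivity
    have h5 := hmono (self_mem_Ici) hT0 hT0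
    have h5' : u (u₀/c) + c*(u₀/c) ≤ u 0 + c*0 := h5
    rw [hinit1] at h5'
    simp only [mul_zero, add_zero] at h5'
    have hcT : c * (u₀ / c) = u₀ := by field_simp
    have := hgt1 (u₀/c) hT0
    linarith [h5']
  rw [hLeq] at htendu
  refine ⟨htendu, ?_⟩
  have hcont1 : ContinuousAt (fun x : ℝ => -Real.sqrt (Fq x)) 1 := by
    apply ContinuousAt.neg
    apply Real.continuous_sqrt.continuousAt.comp
    unfold Fq
    apply ContinuousAt.add
    · exact (continuousAt_const).sub (continuousAt_const.div continuousAt_id (by norm_num))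
    · exact continuousAt_const.div
        ((continuous_const.mul (continuous_pow 3)).continuousAt) (by norm_num)
  have h1 := hcont1.tendsto.comp htendu
  have hval : -Real.sqrt (Fq 1) = 0 := by
    unfold Fq; norm_num
  rw [hval] at h1
  apply Tendsto.congr' _ h1
  filter_upwards [eventually_ge_atTop (0:ℝ)] with t ht
  exact (hform t ht).symm
end
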